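/- arXiv:2410.08557 — 6 statements merged into one kernel-verified Lean document; each statement's English description precedes it below -/
import Mathlib

section
/- Let Z_r ∈ ℝ^{D×N_r}, Z_u ∈ ℝ^{D×N_u}, Z_a = [Z_r Z_u], y_a = [y_r; y_u], and w_init ∈ ℝᴰ. Set K_rr = Z_rᵀ Z_r, K_ru = Z_rᵀ Z_u, K_ur = Z_uᵀ Z_r, K_uu = Z_uᵀ Z_u, assume K_rr is invertible and M := (K_uu − K_ur K_rr⁻¹ K_ru)⁻¹ exists. Then the pre-trained parameters w_p = w_init + Z_a (Z_aᵀ Z_a)⁻¹ (y_a − Z_aᵀ w_init) satisfy the decomposition w_p = w_init + Z_r (K_rr⁻¹ + K_rr⁻¹ K_ru M K_ur K_rr⁻¹)(y_r − Z_rᵀ w_init) − Z_u M K_ur K_rr⁻¹ (y_r − Z_rᵀ w_init) − Z_r K_rr⁻¹ K_ru M (y_u − Z_uᵀ w_init) + Z_u M (y_u − Z_uᵀ w_init). -/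
open Matrix

/-! The Gram matrix of `Z_a = [Z_r Z_u]` is the block matrix of the four Gram blocks, so
`(Z_aᵀ Z_a)⁻¹` is given by the Schur-complement formula for the inverse of a block matrix with
invertible top-left corner; multiplying out blockwise against `y_a − Z_aᵀ w_init` gives the
decomposition. -/

namespace Matrix

variable {R : Type*} {l m n n₁ n₂ : Type*}

theorem transpose_fromCols_mul_fromCols [CommSemiring R] [Fintype m]
    (A₁ : Matrix m n₁ R) (A₂ : Matrix m n₂ R) (B₁ : Matrix m l R) (B₂ : Matrix m n R) :
    (fromCols A₁ A₂)ᵀ * fromCols B₁ B₂ =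
      fromBlocks (A₁ᵀ * B₁) (A₁ᵀ * B₂) (A₂ᵀ * B₁) (A₂ᵀ * B₂) := by
  rw [transpose_fromCols, fromRows_mul_fromCols]

theorem inv_fromBlocks_of_isUnit₁₁ [CommRing R] [Fintype m] [Fintype n] [DecidableEq m]
    [DecidableEq n] {A : Matrix m m R} (B : Matrix m n R) (C : Matrix n m R) (D : Matrix n n R)
    (hA : IsUnit A) (hS : IsUnit (D - C * A⁻¹ * B)) :
    (fromBlocks A B C D)⁻¹ =
      fromBlocks (A⁻¹ + A⁻¹ * B * (D - C * A⁻¹ * B)⁻¹ * C * A⁻¹)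
        (-(A⁻¹ * B * (D - C * A⁻¹ * B)⁻¹))
        (-((D - C * A⁻¹ * B)⁻¹ * C * A⁻¹)) (D - C * A⁻¹ * B)⁻¹ := by
  let := hA.invertible
  let : Invertible (D - C * ⅟A * B) := by
    rw [invOf_eq_nonsing_inv]
    exact hS.invertible
  let := fromBlocks₁₁Invertible A B C D
  rw [← invOf_eq_nonsing_inv, invOf_fromBlocks₁₁_eq]
  simp only [invOf_eq_nonsing_inv]

end Matrix

/-- block decomposition of the pre-trained parameters
`w_p = w_init + Z_a (Z_aᵀ Z_a)⁻¹ (y_a − Z_aᵀ w_init)` in terms of the Gram blocks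
and the inverse Schur complement `M`. -/
theorem pretrained_block_decomposition {D Nr Nu : ℕ}
    (Zr : Matrix (Fin D) (Fin Nr) ℝ) (Zu : Matrix (Fin D) (Fin Nu) ℝ)
    (yr : Fin Nr → ℝ) (yu : Fin Nu → ℝ) (winit : Fin D → ℝ)
    (Za : Matrix (Fin D) (Fin Nr ⊕ Fin Nu) ℝ) (hZa : Za = Matrix.fromCols Zr Zu)
    (ya : Fin Nr ⊕ Fin Nu → ℝ) (hya : ya = Sum.elim yr yu)
    (Krr : Matrix (Fin Nr) (Fin Nr) ℝ) (hKrr : Krr = Zrᵀ * Zr)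
    (Kru : Matrix (Fin Nr) (Fin Nu) ℝ) (hKru : Kru = Zrᵀ * Zu)
    (Kur : Matrix (Fin Nu) (Fin Nr) ℝ) (hKur : Kur = Zuᵀ * Zr)
    (Kuu : Matrix (Fin Nu) (Fin Nu) ℝ) (hKuu : Kuu = Zuᵀ * Zu)
    (hrr : IsUnit Krr) (hS : IsUnit (Kuu - Kur * Krr⁻¹ * Kru))
    (M : Matrix (Fin Nu) (Fin Nu) ℝ) (hM : M = (Kuu - Kur * Krr⁻¹ * Kru)⁻¹)
    (wp : Fin D → ℝ)
    (hwp : wp = winit + Za *ᵥ ((Zaᵀ * Za)⁻¹ *ᵥ (ya - Zaᵀ *ᵥ winit))) :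
    wp = winit
        + Zr *ᵥ ((Krr⁻¹ + Krr⁻¹ * Kru * M * Kur * Krr⁻¹) *ᵥ (yr - Zrᵀ *ᵥ winit))
        - Zu *ᵥ ((M * Kur * Krr⁻¹) *ᵥ (yr - Zrᵀ *ᵥ winit))
        - Zr *ᵥ ((Krr⁻¹ * Kru * M) *ᵥ (yu - Zuᵀ *ᵥ winit))
        + Zu *ᵥ (M *ᵥ (yu - Zuᵀ *ᵥ winit)) := by
  have hGram : Zaᵀ * Za = fromBlocks Krr Kru Kur Kuu := by
    rw [hZa, transpose_fromCols_mul_fromCols, hKrr, hKru, hKur, hKuu]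
  have hResidual : ya - Zaᵀ *ᵥ winit = Sum.elim (yr - Zrᵀ *ᵥ winit) (yu - Zuᵀ *ᵥ winit) := by
    rw [hZa, hya, transpose_fromCols, fromRows_mulVec, Sum.elim_sub_sub]
  rw [hwp, hGram, inv_fromBlocks_of_isUnit₁₁ Kru Kur Kuu hrr hS, ← hM, hResidual,
    fromBlocks_mulVec, hZa, fromCols_mulVec_sumElim]
  simp only [Sum.elim_comp_inl, Sum.elim_comp_inr, mulVec_add, mulVec_neg, neg_mulVec]
  abel
end

section
/- Let Z_r ∈ ℝ^{D×N_r}, Z_u ∈ ℝ^{D×N_u}, Z_a = [Z_r Z_u], assume K_rr = Z_rᵀ Z_r is invertible and M := (K_uu − K_ur K_rr⁻¹ K_ru)⁻¹ exists. Let w_p ∈ ℝᴰ satisfy Z_rᵀ w_p = y_r (interpolation of remaining data), let ỹ_u ∈ ℝ^{N_u}, ỹ_a = [y_r; ỹ_u], and define the unlearned model w_u = w_p + Z_a (Z_aᵀ Z_a)⁻¹ (ỹ_a − Z_aᵀ w_p). Then, with Π_r = Z_r K_rr⁻¹ Z_rᵀ, it holds that w_p − w_u = (I_D − Π_r) Z_u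 M ( Z_uᵀ w_p − ỹ_u ). -/
/-!
Interpolation of the remaining data makes the residual `ỹ_a - Z_aᵀ w_p` vanish on its first
block, so only the last block column of `(Z_aᵀ Z_a)⁻¹` matters. By the Schur-complement formula
that column is `(-K_rr⁻¹ K_ru M ; M)`, and `Z_a` maps it to
`Z_u M - Z_r K_rr⁻¹ K_ru M = (I - Π_r) Z_u M`.
-/

open Matrix

namespace Matrix

variable {α : Type*} [CommRing α] {d m n : Type*} [Fintype d]

theorem transpose_fromCols_mul_fromCols_s5 (Z₁ : Matrix d m α) (Z₂ : Matrix d n α) :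
    (fromCols Z₁ Z₂)ᵀ * fromCols Z₁ Z₂ =
      fromBlocks (Z₁ᵀ * Z₁) (Z₁ᵀ * Z₂) (Z₂ᵀ * Z₁) (Z₂ᵀ * Z₂) := by
  rw [transpose_fromCols, fromRows_mul_fromCols]

variable [Fintype m] [Fintype n] [DecidableEq m] [DecidableEq n]

theorem inv_fromBlocks_mulVec_sumElim_zero {A : Matrix m m α} {B : Matrix m n α}
    {C : Matrix n m α} {D : Matrix n n α} (hA : IsUnit A) (hS : IsUnit (D - C * A⁻¹ * B))
    (u : n → α) :
    (fromBlocks A B C D)⁻¹ *ᵥ Sum.elim 0 u =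
      Sum.elim (-(A⁻¹ * B * (D - C * A⁻¹ * B)⁻¹) *ᵥ u) ((D - C * A⁻¹ * B)⁻¹ *ᵥ u) := by
  let := hA.invertible
  let : Invertible (D - C * ⅟A * B) := by rw [invOf_eq_nonsing_inv]; exact hS.invertible
  let := fromBlocks₁₁Invertible A B C D
  rw [← invOf_eq_nonsing_inv, invOf_fromBlocks₁₁_eq, fromBlocks_mulVec]
  simp [invOf_eq_nonsing_inv]

variable [DecidableEq d]

theorem fromCols_mulVec_inv_gram_mulVec_sumElim_zero (Z₁ : Matrix d m α) (Z₂ : Matrix d n α)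
    (h₁ : IsUnit (Z₁ᵀ * Z₁))
    (hS : IsUnit (Z₂ᵀ * Z₂ - Z₂ᵀ * Z₁ * (Z₁ᵀ * Z₁)⁻¹ * (Z₁ᵀ * Z₂))) (u : n → α) :
    fromCols Z₁ Z₂ *ᵥ (((fromCols Z₁ Z₂)ᵀ * fromCols Z₁ Z₂)⁻¹ *ᵥ Sum.elim 0 u) =
      ((1 - Z₁ * (Z₁ᵀ * Z₁)⁻¹ * Z₁ᵀ) * Z₂ *
        (Z₂ᵀ * Z₂ - Z₂ᵀ * Z₁ * (Z₁ᵀ * Z₁)⁻¹ * (Z₁ᵀ * Z₂))⁻¹) *ᵥ u := by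
  rw [transpose_fromCols_mul_fromCols_s5, inv_fromBlocks_mulVec_sumElim_zero h₁ hS,
    fromCols_mulVec_sumElim, mulVec_mulVec, mulVec_mulVec, ← add_mulVec]
  congr 1
  simp only [Matrix.mul_neg, Matrix.sub_mul, Matrix.one_mul, Matrix.mul_assoc]
  abel

end Matrix

/-- Lemma 3, second identity: if `w_p` interpolates the remaining data
(`Z_rᵀ w_p = y_r`) and the unlearned model is
`w_u = w_p + Z_a (Z_aᵀ Z_a)⁻¹ (ỹ_a − Z_aᵀ w_p)` with `ỹ_a = [y_r; ỹ_u]`, then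
`w_p − w_u = (I − Π_r) Z_u M (Z_uᵀ w_p − ỹ_u)`. -/
theorem pretrain_minus_unlearn {D Nr Nu : ℕ}
    (Zr : Matrix (Fin D) (Fin Nr) ℝ) (Zu : Matrix (Fin D) (Fin Nu) ℝ)
    (yr : Fin Nr → ℝ) (ytu : Fin Nu → ℝ)
    (Za : Matrix (Fin D) (Fin Nr ⊕ Fin Nu) ℝ) (hZa : Za = Matrix.fromCols Zr Zu)
    (yta : Fin Nr ⊕ Fin Nu → ℝ) (hyta : yta = Sum.elim yr ytu)
    (Krr : Matrix (Fin Nr) (Fin Nr) ℝ) (hKrr : Krr = Zrᵀ * Zr)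
    (Kru : Matrix (Fin Nr) (Fin Nu) ℝ) (hKru : Kru = Zrᵀ * Zu)
    (Kur : Matrix (Fin Nu) (Fin Nr) ℝ) (hKur : Kur = Zuᵀ * Zr)
    (Kuu : Matrix (Fin Nu) (Fin Nu) ℝ) (hKuu : Kuu = Zuᵀ * Zu)
    (hrr : IsUnit Krr) (hS : IsUnit (Kuu - Kur * Krr⁻¹ * Kru))
    (M : Matrix (Fin Nu) (Fin Nu) ℝ) (hM : M = (Kuu - Kur * Krr⁻¹ * Kru)⁻¹)
    (Pr : Matrix (Fin D) (Fin D) ℝ) (hPr : Pr = Zr * Krr⁻¹ * Zrᵀ)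
    (wp : Fin D → ℝ) (hinterp : Zrᵀ *ᵥ wp = yr)
    (wu : Fin D → ℝ)
    (hwu : wu = wp + Za *ᵥ ((Zaᵀ * Za)⁻¹ *ᵥ (yta - Zaᵀ *ᵥ wp))) :
    wp - wu = ((1 - Pr) * Zu * M) *ᵥ (Zuᵀ *ᵥ wp - ytu) := by
  subst hZa hyta hKrr hKru hKur hKuu hM hPr hwu hinterp
  have hres : Sum.elim (Zrᵀ *ᵥ wp) ytu - (fromCols Zr Zu)ᵀ *ᵥ wp =
      Sum.elim (0 : Fin Nr → ℝ) (-(Zuᵀ *ᵥ wp - ytu)) := by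
    rw [transpose_fromCols, fromRows_mulVec, ← Sum.elim_sub_sub, sub_self, neg_sub]
  rw [hres, fromCols_mulVec_inv_gram_mulVec_sumElim_zero Zr Zu hrr hS, mulVec_neg]
  abel
end

section
/- Let Z_r ∈ ℝ^{D×N_r}, Z_u ∈ ℝ^{D×N_u}, Z_a = [Z_r Z_u], w_init ∈ ℝᴰ, y_a = [y_r; y_u], ỹ_u ∈ ℝ^{N_u}, ỹ_a = [y_r; ỹ_u]. Assume K_rr = Z_rᵀ Z_r is invertible and M := (K_uu − K_ur K_rr⁻¹ K_ru)⁻¹ exists. Define w_p = w_init + Z_a (Z_aᵀ Z_a)⁻¹ (y_a − Z_aᵀ w_init), w_u = w_p + Z_a (Z_aᵀ Z_a)⁻¹ (ỹ_a − Z_aᵀ w_p), w_r = w_init + Z_r K_rr⁻¹ (y_r − Z_rᵀ w_init), and Π_r = Z_r K_rr⁻¹ Z_rᵀ. Then w_r − w_u = (I_D − Π_r) Z_u M ( Z_uᵀ Π_r (w_p − w_init) + Z_uᵀ w_init − ỹ_u ). -/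
/-!
Both `w_p` and `w_u` interpolate their labels, so `Z_rᵀ w_p = Z_rᵀ w_u = y_r` and hence
`w_r = w_init + Π_r (w_p - w_init) = w_init + Π_r (w_u - w_init)`, i.e.
`w_r - w_u = -(I - Π_r)(w_u - w_init)`. The vector `w_u - w_init` lies in the column span of
`Z_a = [Z_r Z_u]`; as `I - Π_r` kills `Z_r`, on that span it agrees with
`(I - Π_r) Z_u M Z_uᵀ (I - Π_r)`, where `M⁻¹ = Z_uᵀ (I - Π_r) Z_u` is the Schur complement of `K_rr`
in `Z_aᵀ Z_a`. Expanding `Z_uᵀ (I - Π_r)(w_u - w_init)` using `Z_uᵀ w_u = ỹ_u` gives the formula.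
-/

open Matrix

namespace Matrix

variable {R : Type*} [CommRing R] {m n p : Type*} [Fintype m]

/-- The model SGD converges to when started at `w` on the least-squares problem with feature
columns `Z` and labels `y`: the interpolant of `y` nearest to `w`. -/
noncomputable def minNormUpdate [Fintype n] [DecidableEq n] (Z : Matrix m n R) (w : m → R)
    (y : n → R) : m → R :=
  w + Z *ᵥ ((Zᵀ * Z)⁻¹ *ᵥ (y - Zᵀ *ᵥ w))

theorem transpose_mulVec_minNormUpdate [Fintype n] [DecidableEq n] {Z : Matrix m n R}
    (hZ : IsUnit (Zᵀ * Z)) (w : m → R) (y : n → R) : Zᵀ *ᵥ minNormUpdate Z w y = y := by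
  rw [minNormUpdate, mulVec_add, mulVec_mulVec, mulVec_mulVec,
    mul_nonsing_inv _ ((isUnit_iff_isUnit_det _).mp hZ), one_mulVec, add_sub_cancel]

theorem transpose_fromCols_mulVec_minNormUpdate [Fintype n] [Fintype p] [DecidableEq n]
    [DecidableEq p] {A : Matrix m n R} {B : Matrix m p R}
    (hG : IsUnit ((fromCols A B)ᵀ * fromCols A B)) (w : m → R) (y₁ : n → R) (y₂ : p → R) :
    Aᵀ *ᵥ minNormUpdate (fromCols A B) w (Sum.elim y₁ y₂) = y₁ ∧
      Bᵀ *ᵥ minNormUpdate (fromCols A B) w (Sum.elim y₁ y₂) = y₂ := by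
  rw [← Sum.elim_eq_iff, ← fromRows_mulVec, ← transpose_fromCols]
  exact transpose_mulVec_minNormUpdate hG _ _

theorem minNormUpdate_sub_mem_range [Fintype n] [DecidableEq n] (Z : Matrix m n R) (w : m → R)
    (y : n → R) : minNormUpdate Z w y - w ∈ LinearMap.range Z.mulVecLin :=
  ⟨_, (add_sub_cancel_left w _).symm⟩

theorem minNormUpdate_eq_add_mulVec_sub [Fintype n] [DecidableEq n] {Z : Matrix m n R}
    {w w' : m → R} {y : n → R} (hw' : Zᵀ *ᵥ w' = y) :
    minNormUpdate Z w y = w + (Z * (Zᵀ * Z)⁻¹ * Zᵀ) *ᵥ (w' - w) := by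
  rw [minNormUpdate, ← hw', ← mulVec_sub, mulVec_mulVec, mulVec_mulVec, Matrix.mul_assoc]

theorem one_sub_projection_mul_self [DecidableEq m] [Fintype n] [DecidableEq n] {Z : Matrix m n R}
    (hZ : IsUnit (Zᵀ * Z)) :
    (1 - Z * (Zᵀ * Z)⁻¹ * Zᵀ) * Z = 0 := by
  rw [Matrix.sub_mul, Matrix.one_mul, Matrix.mul_assoc, Matrix.mul_assoc,
    nonsing_inv_mul _ ((isUnit_iff_isUnit_det _).mp hZ), Matrix.mul_one, sub_self]

theorem isUnit_transpose_fromCols_mul_fromCols [Fintype n] [Fintype p] [DecidableEq n]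
    [DecidableEq p] {A : Matrix m n R} {B : Matrix m p R} (hA : IsUnit (Aᵀ * A))
    (hS : IsUnit (Bᵀ * B - Bᵀ * A * (Aᵀ * A)⁻¹ * (Aᵀ * B))) :
    IsUnit ((fromCols A B)ᵀ * fromCols A B) := by
  let := hA.invertible
  rwa [transpose_fromCols, fromRows_mul_fromCols, isUnit_fromBlocks_iff_of_invertible₁₁,
    invOf_eq_nonsing_inv]

theorem mul_fromCols_eq_of_mul_eq_zero [Fintype p] [DecidableEq p] {Q : Matrix m m R}
    {A : Matrix m n R} {B : Matrix m p R} (hQA : Q * A = 0) (hS : IsUnit (Bᵀ * Q * B)) :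
    Q * fromCols A B = Q * B * (Bᵀ * Q * B)⁻¹ * Bᵀ * Q * fromCols A B := by
  have hSS := nonsing_inv_mul _ ((isUnit_iff_isUnit_det _).mp hS)
  rw [mul_fromCols, mul_fromCols]
  congr 1
  · simp only [Matrix.mul_assoc, hQA, Matrix.mul_zero]
  · simp only [Matrix.mul_assoc] at hSS ⊢
    rw [hSS, Matrix.mul_one]

end Matrix

/-- Theorem 1, gap to the gold standard: with the SGD minimum-norm
pre-trained, unlearned, and retrained models `w_p`, `w_u`, `w_r` given by their
closed forms, `w_r − w_u = (I − Π_r) Z_u M (Z_uᵀ Π_r (w_p − w_init) + Z_uᵀ w_init − ỹ_u)`. -/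
theorem gap_to_gold_standard {D Nr Nu : ℕ}
    (Zr : Matrix (Fin D) (Fin Nr) ℝ) (Zu : Matrix (Fin D) (Fin Nu) ℝ)
    (yr : Fin Nr → ℝ) (yu : Fin Nu → ℝ) (ytu : Fin Nu → ℝ) (winit : Fin D → ℝ)
    (Za : Matrix (Fin D) (Fin Nr ⊕ Fin Nu) ℝ) (hZa : Za = Matrix.fromCols Zr Zu)
    (ya : Fin Nr ⊕ Fin Nu → ℝ) (hya : ya = Sum.elim yr yu)
    (yta : Fin Nr ⊕ Fin Nu → ℝ) (hyta : yta = Sum.elim yr ytu)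
    (Krr : Matrix (Fin Nr) (Fin Nr) ℝ) (hKrr : Krr = Zrᵀ * Zr)
    (Kru : Matrix (Fin Nr) (Fin Nu) ℝ) (hKru : Kru = Zrᵀ * Zu)
    (Kur : Matrix (Fin Nu) (Fin Nr) ℝ) (hKur : Kur = Zuᵀ * Zr)
    (Kuu : Matrix (Fin Nu) (Fin Nu) ℝ) (hKuu : Kuu = Zuᵀ * Zu)
    (hrr : IsUnit Krr) (hS : IsUnit (Kuu - Kur * Krr⁻¹ * Kru))
    (M : Matrix (Fin Nu) (Fin Nu) ℝ) (hM : M = (Kuu - Kur * Krr⁻¹ * Kru)⁻¹)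
    (Pr : Matrix (Fin D) (Fin D) ℝ) (hPr : Pr = Zr * Krr⁻¹ * Zrᵀ)
    (wp : Fin D → ℝ)
    (hwp : wp = winit + Za *ᵥ ((Zaᵀ * Za)⁻¹ *ᵥ (ya - Zaᵀ *ᵥ winit)))
    (wu : Fin D → ℝ)
    (hwu : wu = wp + Za *ᵥ ((Zaᵀ * Za)⁻¹ *ᵥ (yta - Zaᵀ *ᵥ wp)))
    (wr : Fin D → ℝ)
    (hwr : wr = winit + Zr *ᵥ (Krr⁻¹ *ᵥ (yr - Zrᵀ *ᵥ winit))) :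
    wr - wu =
      ((1 - Pr) * Zu * M) *ᵥ
        (Zuᵀ *ᵥ (Pr *ᵥ (wp - winit)) + Zuᵀ *ᵥ winit - ytu) := by
  subst hZa hya hyta hKrr hKru hKur hKuu hM
  change wp = minNormUpdate _ winit _ at hwp
  change wu = minNormUpdate _ wp _ at hwu
  change wr = minNormUpdate Zr winit yr at hwr
  have hG := isUnit_transpose_fromCols_mul_fromCols hrr hS
  have hSchur : Zuᵀ * Zu - Zuᵀ * Zr * (Zrᵀ * Zr)⁻¹ * (Zrᵀ * Zu) = Zuᵀ * (1 - Pr) * Zu := by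
    simp only [hPr, Matrix.mul_sub, Matrix.sub_mul, Matrix.mul_one, Matrix.mul_assoc]
  rw [hSchur] at hS ⊢
  obtain ⟨hwp_r, -⟩ := hwp ▸ transpose_fromCols_mulVec_minNormUpdate hG winit yr yu
  obtain ⟨hwu_r, hwu_u⟩ := hwu ▸ transpose_fromCols_mulVec_minNormUpdate hG wp yr ytu
  have hwr' : wr = winit + Pr *ᵥ (wp - winit) :=
    hPr ▸ hwr ▸ minNormUpdate_eq_add_mulVec_sub hwp_r
  have hPr_wu : Pr *ᵥ (wu - winit) = Pr *ᵥ (wp - winit) := by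
    simp only [hPr, ← mulVec_mulVec, mulVec_sub, hwu_r, hwp_r]
  obtain ⟨v, hv⟩ : wu - winit ∈ LinearMap.range (fromCols Zr Zu).mulVecLin := by
    rw [← sub_add_sub_cancel wu wp winit, hwu, hwp]
    exact add_mem (minNormUpdate_sub_mem_range ..) (minNormUpdate_sub_mem_range ..)
  have hres : (1 - Pr) *ᵥ (wu - winit) =
      ((1 - Pr) * Zu * (Zuᵀ * (1 - Pr) * Zu)⁻¹ * Zuᵀ * (1 - Pr)) *ᵥ (wu - winit) := by
    rw [← hv, mulVecLin_apply, mulVec_mulVec, mulVec_mulVec,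
      ← mul_fromCols_eq_of_mul_eq_zero (hPr ▸ one_sub_projection_mul_self hrr) hS]
  calc wr - wu = -((1 - Pr) *ᵥ (wu - winit)) := by
        rw [hwr', sub_mulVec, one_mulVec, hPr_wu]; abel
    _ = -(((1 - Pr) * Zu * (Zuᵀ * (1 - Pr) * Zu)⁻¹) *ᵥ
          (Zuᵀ *ᵥ ((1 - Pr) *ᵥ (wu - winit)))) := by
        conv_lhs => rw [hres]
        simp only [mulVec_mulVec, Matrix.mul_assoc]
    _ = _ := by
        rw [← mulVec_neg, sub_mulVec, one_mulVec, mulVec_sub, mulVec_sub, hwu_u, hPr_wu]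
        congr 1; abel
end

section
/- Under the setting of Theorem 1 — Z_r ∈ ℝ^{D×N_r}, Z_u ∈ ℝ^{D×N_u}, Z_a = [Z_r Z_u], K_rr = Z_rᵀ Z_r invertible, M := (K_uu − K_ur K_rr⁻¹ K_ru)⁻¹ existing, Π_r = Z_r K_rr⁻¹ Z_rᵀ, w_p = w_init + Z_a (Z_aᵀ Z_a)⁻¹ (y_a − Z_aᵀ w_init), w_u = w_p + Z_a (Z_aᵀ Z_a)⁻¹ ([y_r; ỹ_u] − Z_aᵀ w_p), w_r = w_init + Z_r K_rr⁻¹ (y_r − Z_rᵀ w_init) — if the forgetting data are relabeled as ỹ_u = Z_uᵀ ( Π_r (w_p − w_init) + w_init ), then the unlearned model coincides exactly with the retrained model: w_u = w_r. -/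
/-!
The update `w + Z (ZᵀZ)⁻¹ (y − Zᵀw)` is the unique point of `w + col Z` fitting the labels `y`:
`Zᵀ` is injective on `col Z` as soon as `ZᵀZ` is invertible. The retrained model fits `y_r`
on the remaining data and, being `w_init + Π_r (w_p − w_init)`, fits exactly the relabelled
targets `ỹ_u` on the forgetting data. The unlearned model fits the same labels `[y_r; ỹ_u]`, and
both lie in `w_init + col Z_a`, so they coincide.
-/

open Matrix

namespace Matrix

variable {m n p R : Type*} [CommRing R]

section Interpolation

variable [Fintype m] [Fintype n] [DecidableEq n]

noncomputable def minNormInterpolant (Z : Matrix m n R) (w : m → R) (y : n → R) : m → R :=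
  w + Z *ᵥ ((Zᵀ * Z)⁻¹ *ᵥ (y - Zᵀ *ᵥ w))

theorem transpose_mulVec_minNormInterpolant {Z : Matrix m n R} (hZ : IsUnit (Zᵀ * Z))
    (w : m → R) (y : n → R) : Zᵀ *ᵥ minNormInterpolant Z w y = y := by
  rw [minNormInterpolant, mulVec_add, mulVec_mulVec, mulVec_mulVec,
    mul_nonsing_inv _ ((isUnit_iff_isUnit_det _).mp hZ), one_mulVec, add_sub_cancel]

theorem minNormInterpolant_sub_mem_range (Z : Matrix m n R) (w : m → R) (y : n → R) :
    minNormInterpolant Z w y - w ∈ LinearMap.range Z.mulVecLin :=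
  ⟨_, (add_sub_cancel_left w _).symm⟩

theorem minNormInterpolant_sub_eq_of_transpose_mulVec_eq {Z : Matrix m n R} {w v : m → R}
    {y : n → R} (hv : Zᵀ *ᵥ v = y) :
    minNormInterpolant Z w y - w = (Z * (Zᵀ * Z)⁻¹ * Zᵀ) *ᵥ (v - w) := by
  rw [minNormInterpolant, add_sub_cancel_left, ← hv, ← mulVec_sub, mulVec_mulVec, mulVec_mulVec,
    Matrix.mul_assoc]

theorem eq_of_sub_mem_range_of_transpose_mulVec_eq {Z : Matrix m n R} (hZ : IsUnit (Zᵀ * Z))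
    {u v : m → R} (hmem : u - v ∈ LinearMap.range Z.mulVecLin) (h : Zᵀ *ᵥ u = Zᵀ *ᵥ v) :
    u = v := by
  obtain ⟨x, hx⟩ := hmem
  rw [mulVecLin_apply] at hx
  have hgram : (Zᵀ * Z) *ᵥ x = 0 := by rw [← mulVec_mulVec, hx, mulVec_sub, h, sub_self]
  have hx0 : x = 0 := by
    rw [← one_mulVec x, ← nonsing_inv_mul _ ((isUnit_iff_isUnit_det _).mp hZ), ← mulVec_mulVec,
      hgram, mulVec_zero]
  rw [hx0, mulVec_zero] at hx
  exact sub_eq_zero.mp hx.symm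

end Interpolation

theorem fromCols_transpose_mulVec [Fintype m] (A : Matrix m n R) (B : Matrix m p R) (v : m → R) :
    (fromCols A B)ᵀ *ᵥ v = Sum.elim (Aᵀ *ᵥ v) (Bᵀ *ᵥ v) := by
  rw [transpose_fromCols, fromRows_mulVec]

theorem range_mulVecLin_le_fromCols [Fintype n] [Fintype p] (A : Matrix m n R)
    (B : Matrix m p R) :
    LinearMap.range A.mulVecLin ≤ LinearMap.range (fromCols A B).mulVecLin := by
  rintro _ ⟨x, rfl⟩
  exact ⟨Sum.elim x 0, by simp⟩

theorem isUnit_fromCols_transpose_mul_fromCols [Fintype m] [Fintype n] [Fintype p]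
    [DecidableEq n] [DecidableEq p] {A : Matrix m n R} {B : Matrix m p R} (hA : IsUnit (Aᵀ * A))
    (hS : IsUnit (Bᵀ * B - Bᵀ * A * (Aᵀ * A)⁻¹ * (Aᵀ * B))) :
    IsUnit ((fromCols A B)ᵀ * fromCols A B) := by
  let := hA.invertible
  rwa [transpose_fromCols, fromRows_mul_fromCols, isUnit_fromBlocks_iff_of_invertible₁₁,
    invOf_eq_nonsing_inv]

end Matrix

/-- Corollary 1, exact machine unlearning: under the setting of
Theorem 1, relabeling the forgetting data as `ỹ_u = Z_uᵀ (Π_r (w_p − w_init) + w_init)`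
makes the unlearned model coincide exactly with the retrained model: `w_u = w_r`. -/
theorem exact_unlearning_by_relabel {D Nr Nu : ℕ}
    (Zr : Matrix (Fin D) (Fin Nr) ℝ) (Zu : Matrix (Fin D) (Fin Nu) ℝ)
    (yr : Fin Nr → ℝ) (yu : Fin Nu → ℝ) (ytu : Fin Nu → ℝ) (winit : Fin D → ℝ)
    (Za : Matrix (Fin D) (Fin Nr ⊕ Fin Nu) ℝ) (hZa : Za = Matrix.fromCols Zr Zu)
    (ya : Fin Nr ⊕ Fin Nu → ℝ) (hya : ya = Sum.elim yr yu)
    (yta : Fin Nr ⊕ Fin Nu → ℝ) (hyta : yta = Sum.elim yr ytu)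
    (Krr : Matrix (Fin Nr) (Fin Nr) ℝ) (hKrr : Krr = Zrᵀ * Zr)
    (Kru : Matrix (Fin Nr) (Fin Nu) ℝ) (hKru : Kru = Zrᵀ * Zu)
    (Kur : Matrix (Fin Nu) (Fin Nr) ℝ) (hKur : Kur = Zuᵀ * Zr)
    (Kuu : Matrix (Fin Nu) (Fin Nu) ℝ) (hKuu : Kuu = Zuᵀ * Zu)
    (hrr : IsUnit Krr) (hS : IsUnit (Kuu - Kur * Krr⁻¹ * Kru))
    (Pr : Matrix (Fin D) (Fin D) ℝ) (hPr : Pr = Zr * Krr⁻¹ * Zrᵀ)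
    (wp : Fin D → ℝ)
    (hwp : wp = winit + Za *ᵥ ((Zaᵀ * Za)⁻¹ *ᵥ (ya - Zaᵀ *ᵥ winit)))
    (wu : Fin D → ℝ)
    (hwu : wu = wp + Za *ᵥ ((Zaᵀ * Za)⁻¹ *ᵥ (yta - Zaᵀ *ᵥ wp)))
    (wr : Fin D → ℝ)
    (hwr : wr = winit + Zr *ᵥ (Krr⁻¹ *ᵥ (yr - Zrᵀ *ᵥ winit)))
    (hrelabel : ytu = Zuᵀ *ᵥ (Pr *ᵥ (wp - winit) + winit)) :
    wu = wr := by
  replace hwp : wp = minNormInterpolant Za winit ya := hwp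
  replace hwu : wu = minNormInterpolant Za wp yta := hwu
  subst hKrr hKru hKur hKuu hZa hya hyta hPr
  replace hwr : wr = minNormInterpolant Zr winit yr := hwr
  have hA := isUnit_fromCols_transpose_mul_fromCols hrr hS
  have hwp_fit := transpose_mulVec_minNormInterpolant hA winit (Sum.elim yr yu)
  rw [← hwp, fromCols_transpose_mulVec, Sum.elim_eq_iff] at hwp_fit
  have hwr_proj : wr - winit = (Zr * (Zrᵀ * Zr)⁻¹ * Zrᵀ) *ᵥ (wp - winit) :=
    hwr ▸ minNormInterpolant_sub_eq_of_transpose_mulVec_eq hwp_fit.1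
  have hwr_fit : (fromCols Zr Zu)ᵀ *ᵥ wr = Sum.elim yr ytu := by
    rw [fromCols_transpose_mulVec, hrelabel, ← hwr_proj, sub_add_cancel, hwr,
      transpose_mulVec_minNormInterpolant hrr]
  have hwu_fit : (fromCols Zr Zu)ᵀ *ᵥ wu = Sum.elim yr ytu :=
    hwu ▸ transpose_mulVec_minNormInterpolant hA wp _
  refine eq_of_sub_mem_range_of_transpose_mulVec_eq hA ?_ (hwu_fit.trans hwr_fit.symm)
  rw [show wu - wr = (wu - wp) + (wp - winit) - (wr - winit) by abel, hwu, hwp, hwr]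
  exact sub_mem (add_mem (minNormInterpolant_sub_mem_range _ _ _)
    (minNormInterpolant_sub_mem_range _ _ _))
    (range_mulVecLin_le_fromCols Zr Zu (minNormInterpolant_sub_mem_range _ _ _))
end

section
/- Let Z_r ∈ ℝ^{D×N_r} with K_rr = Z_rᵀ Z_r invertible, Z_u ∈ ℝ^{D×N_u}, B ∈ ℝ^{N_r×N_u}, Z_{r,sub} = Z_r B, and for a scalar c set Z̃_u = (1−c) Z_{r,sub} + c Z_u. Define K̃_ru = Z_rᵀ Z̃_u, K̃_ur = Z̃_uᵀ Z_r, K̃_uu = Z̃_uᵀ Z̃_u, and K_ru = Z_rᵀ Z_u, K_ur = Z_uᵀ Z_r, K_uu = Z_uᵀ Z_u. Then the Schur complements satisfy K̃_uu − K̃_ur K_rr⁻¹ K̃_ru = c² ( K_uu − K_ur K_rr⁻¹ K_ru ). Consequently, if M := (K_uu − K_ur K_rr⁻¹ K_ru)⁻¹ exists and c ≠ 0, then K̃_uu − K̃_ur K_rr⁻¹ K̃_ru is invertible with inverse M̃ = c⁻² M. -/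
/-! With `P = Z_r K_rr⁻¹ Z_rᵀ` the orthogonal projection onto the column space of `Z_r`, the
Schur complement of `K_rr` in the Gram matrix of `[Z_r X]` is `Xᵀ (1 - P) X`. Since `1 - P` kills
the column space of `Z_r`, it is unchanged by adding `Z_r B'` to `X`, and it scales by `c²` when
`X` is scaled by `c`; and `Z̃_u = c Z_u + Z_r ((1 - c) B)`. -/

open Matrix

namespace Matrix

variable {m n p R : Type*} [Fintype m] [Fintype n] [DecidableEq n] [CommRing R]

noncomputable def gramSchurCompl (Z : Matrix m n R) (X : Matrix m p R) : Matrix p p R :=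
  Xᵀ * X - Xᵀ * Z * (Zᵀ * Z)⁻¹ * (Zᵀ * X)

theorem gramSchurCompl_add_mul {Z : Matrix m n R} (hZ : IsUnit (Zᵀ * Z).det)
    (X : Matrix m p R) (B : Matrix n p R) :
    gramSchurCompl Z (X + Z * B) = gramSchurCompl Z X := by
  have hgram : (X + Z * B)ᵀ * (X + Z * B) =
      Xᵀ * X + Xᵀ * Z * B + Bᵀ * (Zᵀ * X) + Bᵀ * (Zᵀ * Z) * B := by
    simp only [transpose_add, transpose_mul, Matrix.add_mul, Matrix.mul_add, Matrix.mul_assoc]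
    abel
  have hleft : (X + Z * B)ᵀ * Z = Xᵀ * Z + Bᵀ * (Zᵀ * Z) := by
    rw [transpose_add, transpose_mul, Matrix.add_mul, Matrix.mul_assoc]
  have hright : Zᵀ * (X + Z * B) = Zᵀ * X + Zᵀ * Z * B := by
    rw [Matrix.mul_add, Matrix.mul_assoc]
  unfold gramSchurCompl
  rw [hgram, hleft, hright]
  -- keeps `Matrix.mul_assoc` from splitting `Zᵀ * Z`, so that the cancellations can fire
  set K := Zᵀ * Z
  simp only [Matrix.add_mul, Matrix.mul_add, Matrix.mul_assoc,
    mul_nonsing_inv_cancel_left _ _ hZ, nonsing_inv_mul_cancel_left _ _ hZ]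
  abel

theorem gramSchurCompl_smul (Z : Matrix m n R) (X : Matrix m p R) (c : R) :
    gramSchurCompl Z (c • X) = c ^ 2 • gramSchurCompl Z X := by
  simp only [gramSchurCompl, transpose_smul, Matrix.smul_mul, Matrix.mul_smul, smul_sub,
    smul_smul, sq]

theorem isUnit_smul_and_inv_smul {K : Type*} [Field K] {A : Matrix n n K} (hA : IsUnit A)
    {k : K} (hk : k ≠ 0) : IsUnit (k • A) ∧ (k • A)⁻¹ = k⁻¹ • A⁻¹ :=
  ⟨(isUnit_smul_iff (Units.mk0 k hk) A).mpr hA,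
    inv_smul' A (Units.mk0 k hk) ((isUnit_iff_isUnit_det A).mp hA)⟩

end Matrix

/-- Appendix A, equation (A.3): with `Z̃_u = (1−c) Z_{r,sub} + c Z_u`
and `Z_{r,sub} = Z_r B`, the mixed Schur complement satisfies
`K̃_uu − K̃_ur K_rr⁻¹ K̃_ru = c² (K_uu − K_ur K_rr⁻¹ K_ru)`; hence if the original
Schur complement is invertible and `c ≠ 0`, the mixed one is invertible with inverse
`M̃ = c⁻² M`. -/
theorem mixed_schur_complement_scaling {D Nr Nu : ℕ}
    (Zr : Matrix (Fin D) (Fin Nr) ℝ) (Zu : Matrix (Fin D) (Fin Nu) ℝ)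
    (Krr : Matrix (Fin Nr) (Fin Nr) ℝ) (hKrr : Krr = Zrᵀ * Zr)
    (hrr : IsUnit Krr)
    (B : Matrix (Fin Nr) (Fin Nu) ℝ)
    (Zrsub : Matrix (Fin D) (Fin Nu) ℝ) (hZrsub : Zrsub = Zr * B)
    (c : ℝ)
    (Ztu : Matrix (Fin D) (Fin Nu) ℝ) (hZtu : Ztu = (1 - c) • Zrsub + c • Zu)
    (Ktru : Matrix (Fin Nr) (Fin Nu) ℝ) (hKtru : Ktru = Zrᵀ * Ztu)
    (Ktur : Matrix (Fin Nu) (Fin Nr) ℝ) (hKtur : Ktur = Ztuᵀ * Zr)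
    (Ktuu : Matrix (Fin Nu) (Fin Nu) ℝ) (hKtuu : Ktuu = Ztuᵀ * Ztu)
    (Kru : Matrix (Fin Nr) (Fin Nu) ℝ) (hKru : Kru = Zrᵀ * Zu)
    (Kur : Matrix (Fin Nu) (Fin Nr) ℝ) (hKur : Kur = Zuᵀ * Zr)
    (Kuu : Matrix (Fin Nu) (Fin Nu) ℝ) (hKuu : Kuu = Zuᵀ * Zu) :
    Ktuu - Ktur * Krr⁻¹ * Ktru = (c ^ 2) • (Kuu - Kur * Krr⁻¹ * Kru) ∧
      (∀ M : Matrix (Fin Nu) (Fin Nu) ℝ,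
        IsUnit (Kuu - Kur * Krr⁻¹ * Kru) → M = (Kuu - Kur * Krr⁻¹ * Kru)⁻¹ → c ≠ 0 →
          IsUnit (Ktuu - Ktur * Krr⁻¹ * Ktru) ∧
            (Ktuu - Ktur * Krr⁻¹ * Ktru)⁻¹ = (c ^ 2)⁻¹ • M) := by
  have hKrr_det : IsUnit (Zrᵀ * Zr).det := (isUnit_iff_isUnit_det _).mp (hKrr ▸ hrr)
  have hZtu_split : Ztu = c • Zu + Zr * ((1 - c) • B) := by
    rw [hZtu, hZrsub, Matrix.mul_smul, add_comm]
  have key : Ktuu - Ktur * Krr⁻¹ * Ktru = c ^ 2 • (Kuu - Kur * Krr⁻¹ * Kru) := by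
    calc Ktuu - Ktur * Krr⁻¹ * Ktru = gramSchurCompl Zr Ztu := by
          rw [hKtuu, hKtur, hKrr, hKtru]; rfl
      _ = c ^ 2 • gramSchurCompl Zr Zu := by
          rw [hZtu_split, gramSchurCompl_add_mul hKrr_det, gramSchurCompl_smul]
      _ = c ^ 2 • (Kuu - Kur * Krr⁻¹ * Kru) := by
          rw [hKuu, hKur, hKrr, hKru]; rfl
  refine ⟨key, fun M hS hM hc => ?_⟩
  rw [key, hM]
  exact isUnit_smul_and_inv_smul hS (pow_ne_zero 2 hc)
end

section
/- Let Z_r ∈ ℝ^{D×N_r} with K_rr = Z_rᵀ Z_r invertible, Z_u ∈ ℝ^{D×N_u}, B ∈ ℝ^{N_r×N_u}, Z_{r,sub} = Z_r B, and 0 < c < 1 (any c ≠ 0 suffices). Set Z̃_u = (1−c) Z_{r,sub} + c Z_u and Z̃_a = [Z_r Z̃_u], and assume M := (K_uu − K_ur K_rr⁻¹ K_ru)⁻¹ exists, so that Z̃_aᵀ Z̃_a is invertible. Let w_p ∈ ℝᴰ satisfy Z_rᵀ w_p = y_r, set y_{r,sub} = Bᵀ y_r and ỹ_a = [y_r; y_{r,sub}],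 and define w_u = w_p + Z̃_a (Z̃_aᵀ Z̃_a)⁻¹ (ỹ_a − Z̃_aᵀ w_p). Then, with Π_r = Z_r K_rr⁻¹ Z_rᵀ, it holds that w_p − w_u = (I_D − Π_r) Z_u M ( Z_uᵀ w_p − y_{r,sub} ); in particular this difference does not depend on the mixing scalar c. -/
/-!
With `W = (1 - Π_r) Z_u` one has `Z̃_u = Z_r X + c W` for `X = (1 - c) B + c K_rr⁻¹ K_ru`, so
`Z̃_a = [Z_r  W] U` with `U = [[1, X], [0, c]]`, invertible since `c ≠ 0`. The least-squares
correction `Z (Zᵀ Z)⁻¹ r` is invariant under such a change of parametrisation `Z ↦ Z U`,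
`r ↦ Uᵀ r`, and by interpolation the residual is `[0; -c e] = Uᵀ [0; -e]` with
`e = Z_uᵀ w_p - y_{r,sub}`. Since `Z_rᵀ W = 0`, the Gram matrix of `[Z_r  W]` is block diagonal
with blocks `K_rr` and `Wᵀ W = M⁻¹`, so the correction is `-W M e`; `c` has disappeared.
-/

open Matrix

namespace Matrix

variable {R m n p : Type*} [CommRing R] [Fintype m] [Fintype n] [DecidableEq n]

theorem mul_mulVec_inv_gram_mulVec_transpose_mulVec (Z : Matrix m n R) {U : Matrix n n R}
    (hU : IsUnit U) (s : n → R) :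
    (Z * U) *ᵥ (((Z * U)ᵀ * (Z * U))⁻¹ *ᵥ (Uᵀ *ᵥ s)) = Z *ᵥ ((Zᵀ * Z)⁻¹ *ᵥ s) := by
  have hU' : IsUnit U.det := (isUnit_iff_isUnit_det U).mp hU
  have hUt : IsUnit Uᵀ.det := by rwa [det_transpose]
  have hreparam : Z * U * ((Z * U)ᵀ * (Z * U))⁻¹ * Uᵀ = Z * (Zᵀ * Z)⁻¹ := by
    rw [transpose_mul, show Uᵀ * Zᵀ * (Z * U) = Uᵀ * (Zᵀ * Z) * U by simp only [Matrix.mul_assoc],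
      mul_inv_rev, mul_inv_rev]
    simp only [Matrix.mul_assoc, mul_nonsing_inv_cancel_left (h := hU'),
      nonsing_inv_mul _ hUt, Matrix.mul_one]
  rw [mulVec_mulVec, mulVec_mulVec, hreparam, mulVec_mulVec]

theorem fromCols_mulVec_inv_gram_mulVec_sumElim_zero_s11 [Fintype p] [DecidableEq p]
    {A : Matrix m n R} {W : Matrix m p R} (hAW : Aᵀ * W = 0) (hA : IsUnit (Aᵀ * A))
    (hW : IsUnit (Wᵀ * W)) (v : p → R) :
    fromCols A W *ᵥ (((fromCols A W)ᵀ * fromCols A W)⁻¹ *ᵥ Sum.elim 0 v) =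
      W *ᵥ ((Wᵀ * W)⁻¹ *ᵥ v) := by
  have hWA : Wᵀ * A = 0 := by simpa using congrArg transpose hAW
  rw [transpose_fromCols, fromRows_mul_fromCols, hAW, hWA,
    inv_fromBlocks_zero₂₁_of_isUnit_iff _ _ _ (iff_of_true hA hW), fromBlocks_mulVec]
  simp

section Projection

variable [DecidableEq m] (Z : Matrix m n R) (Y : Matrix m p R)

theorem transpose_mul_one_sub_proj_mul (hZ : IsUnit (Zᵀ * Z)) :
    Zᵀ * ((1 - Z * (Zᵀ * Z)⁻¹ * Zᵀ) * Y) = 0 := by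
  have hZ' : IsUnit (Zᵀ * Z).det := (isUnit_iff_isUnit_det _).mp hZ
  rw [Matrix.sub_mul, Matrix.one_mul, Matrix.mul_sub]
  simp only [← Matrix.mul_assoc, mul_nonsing_inv _ hZ', Matrix.one_mul, sub_self]

theorem transpose_one_sub_proj : (1 - Z * (Zᵀ * Z)⁻¹ * Zᵀ)ᵀ = 1 - Z * (Zᵀ * Z)⁻¹ * Zᵀ := by
  rw [transpose_sub, transpose_one, transpose_mul, transpose_mul, transpose_transpose,
    transpose_nonsing_inv, transpose_mul, transpose_transpose, Matrix.mul_assoc]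

theorem gram_one_sub_proj_mul [Fintype p] (hZ : IsUnit (Zᵀ * Z)) :
    ((1 - Z * (Zᵀ * Z)⁻¹ * Zᵀ) * Y)ᵀ * ((1 - Z * (Zᵀ * Z)⁻¹ * Zᵀ) * Y) =
      Yᵀ * Y - Yᵀ * Z * (Zᵀ * Z)⁻¹ * (Zᵀ * Y) := by
  set P := Z * (Zᵀ * Z)⁻¹ * Zᵀ with hP
  have hPW : P * ((1 - P) * Y) = 0 := by
    rw [hP, Matrix.mul_assoc, transpose_mul_one_sub_proj_mul Z Y hZ, Matrix.mul_zero]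
  calc ((1 - P) * Y)ᵀ * ((1 - P) * Y) = Yᵀ * ((1 - P) * ((1 - P) * Y)) := by
        rw [transpose_mul, transpose_one_sub_proj, Matrix.mul_assoc]
    _ = Yᵀ * ((1 - P) * Y) := by rw [Matrix.sub_mul 1 P, Matrix.one_mul, hPW, sub_zero]
    _ = Yᵀ * Y - Yᵀ * Z * (Zᵀ * Z)⁻¹ * (Zᵀ * Y) := by
        simp only [hP, Matrix.sub_mul, Matrix.one_mul, Matrix.mul_sub, Matrix.mul_assoc]

end Projection

end Matrix

theorem mixed_data_unlearning_gap_general {D Nr Nu : ℕ}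
    (Zr : Matrix (Fin D) (Fin Nr) ℝ) (Zu : Matrix (Fin D) (Fin Nu) ℝ)
    (yr : Fin Nr → ℝ)
    (Krr : Matrix (Fin Nr) (Fin Nr) ℝ) (hKrr : Krr = Zrᵀ * Zr)
    (hrr : IsUnit Krr)
    (Kru : Matrix (Fin Nr) (Fin Nu) ℝ) (hKru : Kru = Zrᵀ * Zu)
    (Kur : Matrix (Fin Nu) (Fin Nr) ℝ) (hKur : Kur = Zuᵀ * Zr)
    (Kuu : Matrix (Fin Nu) (Fin Nu) ℝ) (hKuu : Kuu = Zuᵀ * Zu)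
    (hS : IsUnit (Kuu - Kur * Krr⁻¹ * Kru))
    (M : Matrix (Fin Nu) (Fin Nu) ℝ) (hM : M = (Kuu - Kur * Krr⁻¹ * Kru)⁻¹)
    (B : Matrix (Fin Nr) (Fin Nu) ℝ)
    (Zrsub : Matrix (Fin D) (Fin Nu) ℝ) (hZrsub : Zrsub = Zr * B)
    (c : ℝ) (hc0 : 0 < c)
    (Ztu : Matrix (Fin D) (Fin Nu) ℝ) (hZtu : Ztu = (1 - c) • Zrsub + c • Zu)
    (Zta : Matrix (Fin D) (Fin Nr ⊕ Fin Nu) ℝ) (hZta : Zta = Matrix.fromCols Zr Ztu)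
    (yrsub : Fin Nu → ℝ) (hyrsub : yrsub = Bᵀ *ᵥ yr)
    (yta : Fin Nr ⊕ Fin Nu → ℝ) (hyta : yta = Sum.elim yr yrsub)
    (Pr : Matrix (Fin D) (Fin D) ℝ) (hPr : Pr = Zr * Krr⁻¹ * Zrᵀ)
    (wp : Fin D → ℝ) (hinterp : Zrᵀ *ᵥ wp = yr)
    (wu : Fin D → ℝ)
    (hwu : wu = wp + Zta *ᵥ ((Ztaᵀ * Zta)⁻¹ *ᵥ (yta - Ztaᵀ *ᵥ wp))) :
    wp - wu = ((1 - Pr) * Zu * M) *ᵥ (Zuᵀ *ᵥ wp - yrsub) := by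
  subst hKrr hKru hKur hKuu hM hZrsub hZtu hZta hyrsub hyta hPr hinterp hwu
  set W := (1 - Zr * (Zrᵀ * Zr)⁻¹ * Zrᵀ) * Zu with hW
  set e := Zuᵀ *ᵥ wp - Bᵀ *ᵥ (Zrᵀ *ᵥ wp)
  set U : Matrix (Fin Nr ⊕ Fin Nu) (Fin Nr ⊕ Fin Nu) ℝ :=
    fromBlocks 1 ((1 - c) • B + c • ((Zrᵀ * Zr)⁻¹ * (Zrᵀ * Zu))) 0 (c • 1) with hU
  have hWgram : Wᵀ * W = Zuᵀ * Zu - Zuᵀ * Zr * (Zrᵀ * Zr)⁻¹ * (Zrᵀ * Zu) :=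
    gram_one_sub_proj_mul Zr Zu hrr
  have hfactor : fromCols Zr ((1 - c) • (Zr * B) + c • Zu) = fromCols Zr W * U := by
    rw [hU, fromCols_mul_fromBlocks, hW]
    congr 1
    · rw [Matrix.mul_one, Matrix.mul_zero, add_zero]
    · simp only [Matrix.mul_smul, Matrix.mul_one, Matrix.mul_add, Matrix.sub_mul, Matrix.one_mul,
        Matrix.mul_assoc]
      module
  have hUunit : IsUnit U :=
    isUnit_fromBlocks_zero₂₁.mpr ⟨isUnit_one, isUnit_one.smul (Units.mk0 c hc0.ne')⟩
  have hresidual : Sum.elim (Zrᵀ *ᵥ wp) (Bᵀ *ᵥ (Zrᵀ *ᵥ wp)) -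
      (fromCols Zr ((1 - c) • (Zr * B) + c • Zu))ᵀ *ᵥ wp = Uᵀ *ᵥ Sum.elim 0 (-e) := by
    rw [transpose_fromCols, fromRows_mulVec, hU, fromBlocks_transpose, fromBlocks_mulVec]
    ext (i | i)
    · simp
    · simp [e, transpose_mul, Matrix.add_mulVec, Matrix.smul_mulVec, ← mulVec_mulVec]
      ring
  rw [hresidual, hfactor, mul_mulVec_inv_gram_mulVec_transpose_mulVec _ hUunit,
    fromCols_mulVec_inv_gram_mulVec_sumElim_zero_s11 (transpose_mul_one_sub_proj_mul Zr Zu hrr) hrr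
      (hWgram ▸ hS), hWgram, mulVec_neg, mulVec_neg, Matrix.mulVec_mulVec]
  abel

/-- Appendix A: fine-tuning the interpolating pre-trained model `w_p`
on the mixed data `Z̃_a = [Z_r  Z̃_u]`, `Z̃_u = (1−c) Z_{r,sub} + c Z_u`, relabeled
with `ỹ_a = [y_r; y_{r,sub}]`, gives
`w_p − w_u = (I − Π_r) Z_u M (Z_uᵀ w_p − y_{r,sub})`, independently of `c`. -/
theorem mixed_data_unlearning_gap {D Nr Nu : ℕ}
    (Zr : Matrix (Fin D) (Fin Nr) ℝ) (Zu : Matrix (Fin D) (Fin Nu) ℝ)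
    (yr : Fin Nr → ℝ)
    (Krr : Matrix (Fin Nr) (Fin Nr) ℝ) (hKrr : Krr = Zrᵀ * Zr)
    (hrr : IsUnit Krr)
    (Kru : Matrix (Fin Nr) (Fin Nu) ℝ) (hKru : Kru = Zrᵀ * Zu)
    (Kur : Matrix (Fin Nu) (Fin Nr) ℝ) (hKur : Kur = Zuᵀ * Zr)
    (Kuu : Matrix (Fin Nu) (Fin Nu) ℝ) (hKuu : Kuu = Zuᵀ * Zu)
    (hS : IsUnit (Kuu - Kur * Krr⁻¹ * Kru))
    (M : Matrix (Fin Nu) (Fin Nu) ℝ) (hM : M = (Kuu - Kur * Krr⁻¹ * Kru)⁻¹)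
    (B : Matrix (Fin Nr) (Fin Nu) ℝ)
    (Zrsub : Matrix (Fin D) (Fin Nu) ℝ) (hZrsub : Zrsub = Zr * B)
    (c : ℝ) (hc0 : 0 < c) (hc1 : c < 1)
    (Ztu : Matrix (Fin D) (Fin Nu) ℝ) (hZtu : Ztu = (1 - c) • Zrsub + c • Zu)
    (Zta : Matrix (Fin D) (Fin Nr ⊕ Fin Nu) ℝ) (hZta : Zta = Matrix.fromCols Zr Ztu)
    (yrsub : Fin Nu → ℝ) (hyrsub : yrsub = Bᵀ *ᵥ yr)
    (yta : Fin Nr ⊕ Fin Nu → ℝ) (hyta : yta = Sum.elim yr yrsub)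
    (Pr : Matrix (Fin D) (Fin D) ℝ) (hPr : Pr = Zr * Krr⁻¹ * Zrᵀ)
    (wp : Fin D → ℝ) (hinterp : Zrᵀ *ᵥ wp = yr)
    (wu : Fin D → ℝ)
    (hwu : wu = wp + Zta *ᵥ ((Ztaᵀ * Zta)⁻¹ *ᵥ (yta - Ztaᵀ *ᵥ wp))) :
    wp - wu = ((1 - Pr) * Zu * M) *ᵥ (Zuᵀ *ᵥ wp - yrsub) :=
  mixed_data_unlearning_gap_general Zr Zu yr Krr hKrr hrr Kru hKru Kur hKur Kuu hKuu hS M hM B Zrsub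
    hZrsub c hc0 Ztu hZtu Zta hZta yrsub hyrsub yta hyta Pr hPr wp hinterp wu hwu
end
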